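/- Let ρ and σ be Hermitian (1+n)-qubit matrices with upper-right blocks A = (⟨0|⊗I)ρ(|1⟩⊗I) and B = (⟨0|⊗I)σ(|1⟩⊗I). Let τ denote ρ⊗σ with tensor factors reordered as (assistant qubit of ρ, assistant qubit of σ, system of ρ, system of σ). Then Tr((|01⟩⟨10| ⊗ SWAP) τ) = Tr(A† B), where |01⟩⟨10| acts on the two assistant qubits and SWAP exchanges the two n-qubit system registers. -/
import Mathlib


open Matrix Kronecker BigOperators

/-- Bitstrings of length `n`, indexing the computational basis of an `n`-qubit system. -/
abbrev BV (n : ℕ) : Type := Fin n → ZMod 2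

/-- Single-qubit basis index. -/
abbrev Q2 : Type := ZMod 2

/-- The upper-right block `(⟨0|⊗I) ρ (|1⟩⊗I)` of a `(1+n)`-qubit matrix. -/
def upperRight {n : ℕ} (ρ : Matrix (Q2 × BV n) (Q2 × BV n) ℂ) :
    Matrix (BV n) (BV n) ℂ :=
  Matrix.of fun i j => ρ (0, i) (1, j)

/-- `ρ ⊗ σ` with tensor factors reordered as
(assistant of ρ, assistant of σ, system of ρ, system of σ). -/
def reorderedTensor {n : ℕ} (ρ σ : Matrix (Q2 × BV n) (Q2 × BV n) ℂ) :
    Matrix ((Q2 × Q2) × (BV n × BV n)) ((Q2 × Q2) × (BV n × BV n)) ℂ :=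
  Matrix.of fun p q => ρ (p.1.1, p.2.1) (q.1.1, q.2.1) * σ (p.1.2, p.2.2) (q.1.2, q.2.2)

/-- The matrix `|01⟩⟨10|` on the two assistant qubits. -/
def P0110 : Matrix (Q2 × Q2) (Q2 × Q2) ℂ :=
  Matrix.of fun p q => if p = (0, 1) ∧ q = (1, 0) then 1 else 0

/-- The SWAP operator on `ℂ^{2^n} ⊗ ℂ^{2^n}`: `|s⟩⊗|t⟩ ↦ |t⟩⊗|s⟩`. -/
def SWAPn (n : ℕ) : Matrix (BV n × BV n) (BV n × BV n) ℂ :=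
  Matrix.of fun p q => if p.1 = q.2 ∧ p.2 = q.1 then 1 else 0

/-- `Tr((|01⟩⟨10| ⊗ SWAP) (ρ⊗σ reordered)) = Tr(A† B)` for Hermitian `ρ, σ` with
upper-right blocks `A, B`. -/
theorem trace_swap_eq_trace_blocks {n : ℕ}
    (ρ σ : Matrix (Q2 × BV n) (Q2 × BV n) ℂ)
    (hρ : ρ.IsHermitian) (hσ : σ.IsHermitian) :
    ((P0110 ⊗ₖ SWAPn n) * reorderedTensor ρ σ).trace
      = ((upperRight ρ)ᴴ * upperRight σ).trace := by
  have hρ' : ∀ i j, (starRingEnd ℂ) (ρ (0, j) (1, i)) = ρ (1, i) (0, j) := fun i j => by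
    have := congrFun (congrFun hρ (1, i)) (0, j)
    simpa [Matrix.conjTranspose_apply] using this
  simp only [Matrix.trace, Matrix.diag, Matrix.mul_apply, Matrix.conjTranspose_apply,
    Matrix.kroneckerMap_apply, P0110, SWAPn, reorderedTensor, upperRight, Matrix.of_apply]
  rw [Finset.sum_comm]
  rw [Fintype.sum_prod_type]
  simp only [Fintype.sum_prod_type, ite_mul, one_mul, zero_mul, mul_ite, mul_zero, mul_one]
  simp only [ite_and, Finset.sum_ite_irrel, Finset.sum_ite_eq, Finset.sum_ite_eq',
    Finset.sum_const_zero, Finset.mem_univ, if_true]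
  simp only [Prod.mk.injEq, ite_and, Finset.sum_ite_irrel, Finset.sum_ite_eq,
    Finset.sum_ite_eq', Finset.sum_const_zero, Finset.mem_univ, if_true]
  simp only [starRingEnd_apply] at hρ'
  simp [hρ']
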